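/- arXiv:1005.2987 — 8 statements merged into one kernel-verified Lean document; each statement's English description precedes it below -/
import Mathlib

section
/- Let A and B be unital commutative complex Banach algebras and let φ : A → B be a spectral morphism. Then for every n ≥ 1 the induced morphism M_n(A) → M_n(B) on n×n matrix algebras (applying φ entrywise) is spectral, i.e. a matrix a ∈ M_n(A) is invertible in M_n(A) if and only if its image is invertible in M_n(B). -/
/-! A morphism preserving spectra reflects units, since `a` is a unit iff `0 ∉ σ a`. Over
commutative rings a matrix is a unit iff its determinant is, and the determinant commutes with
applying `φ` entrywise, so the induced map on matrices reflects units as well. -/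

theorem AlgHom.isLocalHom_of_spectrum_eq {R A B : Type*} [CommSemiring R] [Ring A] [Ring B]
    [Algebra R A] [Algebra R B] (φ : A →ₐ[R] B) (h : ∀ a, spectrum R (φ a) = spectrum R a) :
    IsLocalHom φ :=
  ⟨fun a ha => by rwa [← spectrum.zero_notMem_iff R, ← h, spectrum.zero_notMem_iff]⟩

instance RingHom.isLocalHom_mapMatrix {R S n : Type*} [CommRing R] [CommRing S]
    [Fintype n] [DecidableEq n] (f : R →+* S) [IsLocalHom f] :
    IsLocalHom (f.mapMatrix : Matrix n n R →+* Matrix n n S) :=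
  ⟨fun M hM => (Matrix.isUnit_iff_isUnit_det M).mpr <| isUnit_of_map_unit f _ <|
    f.map_det M ▸ (Matrix.isUnit_iff_isUnit_det _).mp hM⟩

theorem matrix_spectral_of_spectral_comm_general {A B : Type*}
    [NormedCommRing A] [NormedAlgebra ℂ A]
    [NormedCommRing B] [NormedAlgebra ℂ B]
    (φ : A →ₐ[ℂ] B)
    (hspec : ∀ a : A, spectrum ℂ (φ a) = spectrum ℂ a) :
    ∀ n : ℕ, 1 ≤ n → ∀ M : Matrix (Fin n) (Fin n) A,
      IsUnit M ↔ IsUnit (M.map φ) := by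
  intro n _ M
  have : IsLocalHom φ := φ.isLocalHom_of_spectrum_eq hspec
  exact (isUnit_map_iff (φ : A →+* B).mapMatrix M).symm

/-- Let `A` and `B` be unital commutative complex Banach algebras and `φ : A → B` a spectral
morphism. Then for every `n ≥ 1` the induced morphism `M_n(A) → M_n(B)` (applying `φ`
entrywise) is spectral: a matrix `M ∈ M_n(A)` is invertible iff its image is invertible. -/
theorem matrix_spectral_of_spectral_comm {A B : Type*}
    [NormedCommRing A] [NormedAlgebra ℂ A] [CompleteSpace A]
    [NormedCommRing B] [NormedAlgebra ℂ B] [CompleteSpace B]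
    (φ : A →ₐ[ℂ] B) (hcont : Continuous φ)
    (hspec : ∀ a : A, spectrum ℂ (φ a) = spectrum ℂ a) :
    ∀ n : ℕ, 1 ≤ n → ∀ M : Matrix (Fin n) (Fin n) A,
      IsUnit M ↔ IsUnit (M.map φ) :=
  matrix_spectral_of_spectral_comm_general φ hspec
end

section
/- (Swan) Let A and B be unital complex Banach algebras and let φ : A → B be a dense and spectral morphism. Then for every n ≥ 1 the induced morphism M_n(A) → M_n(B) (applying φ entrywise) is a dense and spectral morphism. -/
/-!
Spectrality of `φ` says exactly that `φ` reflects units (`IsLocalHom φ`), and spectrality of the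
entrywise map `Mₙ(A) → Mₙ(B)` is the same property of `φ.mapMatrix`; density is entrywise.

That `φ.mapMatrix` reflects units is proved by induction on `n`. Since the range is dense, it is
enough to find an open neighbourhood `U` of `1` such that every matrix mapped into `U` is
invertible: if `φ(x)` has inverse `w`, approximating `w` by some `φ(y)` and `φ(y')` puts the images
of `x * y` and `y' * x` in `U`, so `x` has a right and a left inverse. Take for `U` the invertible
matrices with invertible last diagonal entry. That entry of `M` is then invertible in `A`, and `M`
is invertible iff its Schur complement with respect to it is; the Schur complement is a smaller
matrix whose image is the (invertible) Schur complement of the image of `M`.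
-/

open Matrix

theorem isUnit_of_isUnit_mul_of_isUnit_mul {M : Type*} [Monoid M] {a b c : M}
    (hr : IsUnit (a * b)) (hl : IsUnit (c * a)) : IsUnit a :=
  isUnit_iff_exists_and_exists.2
    ⟨⟨b * ↑hr.unit⁻¹, by rw [← mul_assoc, IsUnit.mul_val_inv]⟩,
      ⟨↑hl.unit⁻¹ * c, by rw [mul_assoc, IsUnit.val_inv_mul]⟩⟩

theorem isLocalHom_of_denseRange {R S F : Type*} [Monoid R] [Monoid S] [TopologicalSpace S]
    [ContinuousMul S] [FunLike F R S] [MonoidHomClass F R S] {f : F} (hf : DenseRange f)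
    {U : Set S} (hU : IsOpen U) (hU1 : 1 ∈ U) (hfU : ∀ r, f r ∈ U → IsUnit r) :
    IsLocalHom f where
  map_nonunit x := by
    rintro ⟨u, hu⟩
    obtain ⟨y, hy⟩ : ∃ y, f x * f y ∈ U :=
      hf.exists_mem_open (hU.preimage (continuous_const_mul _)) ⟨↑u⁻¹, by simp [← hu, hU1]⟩
    obtain ⟨y', hy'⟩ : ∃ y', f y' * f x ∈ U :=
      hf.exists_mem_open (hU.preimage (continuous_mul_const _)) ⟨↑u⁻¹, by simp [← hu, hU1]⟩
    exact isUnit_of_isUnit_mul_of_isUnit_mul (hfU _ (by rwa [map_mul])) (hfU _ (by rwa [map_mul]))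

section Spectrum

variable {R A B F : Type*} [CommSemiring R] [Ring A] [Ring B] [Algebra R A] [Algebra R B]
  [FunLike F A B]

theorem isLocalHom_of_spectrum_apply_eq [MonoidHomClass F A B] (φ : F)
    (h : ∀ a, spectrum R (φ a) = spectrum R a) : IsLocalHom φ where
  map_nonunit a ha := by
    rw [← spectrum.zero_notMem_iff R, ← h, spectrum.zero_notMem_iff]
    exact ha

theorem spectrum_apply_eq_of_isLocalHom [AlgHomClass F R A B] (φ : F) [IsLocalHom φ] (a : A) :
    spectrum R (φ a) = spectrum R a := by
  ext r
  simp only [spectrum.mem_iff, ← AlgHomClass.commutes φ r, ← map_sub, isUnit_map_iff]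

end Spectrum

namespace Matrix

section Blocks

variable {m n R : Type*} [Fintype m] [Fintype n] [DecidableEq m] [DecidableEq n] [Ring R]

theorem isUnit_fromBlocks_one_one_of_zero₂₁ (B : Matrix m n R) :
    IsUnit (fromBlocks (1 : Matrix m m R) B 0 (1 : Matrix n n R)) :=
  isUnit_iff_exists.2 ⟨fromBlocks (1 : Matrix m m R) (-B) 0 1, by simp [fromBlocks_multiply],
    by simp [fromBlocks_multiply]⟩

theorem isUnit_fromBlocks_one_one_of_zero₁₂ (C : Matrix n m R) :
    IsUnit (fromBlocks (1 : Matrix m m R) 0 C (1 : Matrix n n R)) :=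
  isUnit_iff_exists.2 ⟨fromBlocks (1 : Matrix m m R) 0 (-C) 1, by simp [fromBlocks_multiply],
    by simp [fromBlocks_multiply]⟩

theorem isUnit_fromBlocks_zero_zero_iff {A : Matrix m m R} {D : Matrix n n R} [Invertible D] :
    IsUnit (fromBlocks A 0 0 D) ↔ IsUnit A := by
  refine ⟨fun h => ?_, fun h => ?_⟩
  · obtain ⟨X, hAX, hXA⟩ := isUnit_iff_exists.1 h
    rw [← fromBlocks_toBlocks X, fromBlocks_multiply, ← fromBlocks_one, fromBlocks_inj] at hAX hXA
    exact isUnit_iff_exists.2 ⟨X.toBlocks₁₁, by simpa using hAX.1, by simpa using hXA.1⟩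
  · obtain ⟨X, hAX, hXA⟩ := isUnit_iff_exists.1 h
    exact isUnit_iff_exists.2 ⟨fromBlocks X 0 0 ⅟D, by simp [fromBlocks_multiply, hAX],
      by simp [fromBlocks_multiply, hXA]⟩

-- Noncommutative versions of `Matrix.fromBlocks_eq_of_invertible₂₂` and
-- `Matrix.isUnit_fromBlocks_iff_of_invertible₂₂`, which Mathlib states over a `CommRing`.
theorem fromBlocks_eq_of_invertible₂₂' (A : Matrix m m R) (B : Matrix m n R) (C : Matrix n m R)
    (D : Matrix n n R) [Invertible D] :
    fromBlocks A B C D =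
      fromBlocks 1 (B * ⅟D) 0 1 * fromBlocks (A - B * ⅟D * C) 0 0 D *
        fromBlocks 1 0 (⅟D * C) 1 := by
  simp [fromBlocks_multiply, Matrix.mul_assoc, Matrix.mul_invOf_cancel_left]

theorem isUnit_fromBlocks_iff_of_invertible₂₂' {A : Matrix m m R} {B : Matrix m n R}
    {C : Matrix n m R} {D : Matrix n n R} [Invertible D] :
    IsUnit (fromBlocks A B C D) ↔ IsUnit (A - B * ⅟D * C) := by
  obtain ⟨L, hL⟩ := isUnit_fromBlocks_one_one_of_zero₂₁ (B * ⅟D)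
  obtain ⟨U, hU⟩ := isUnit_fromBlocks_one_one_of_zero₁₂ (⅟D * C)
  rw [fromBlocks_eq_of_invertible₂₂', ← hL, ← hU, Units.isUnit_mul_units,
    Units.isUnit_units_mul, isUnit_fromBlocks_zero_zero_iff]

theorem isUnit_fromBlocks_of_isUnit_map {S : Type*} [Ring S] (f : R →+* S)
    [IsLocalHom (f.mapMatrix : Matrix m m R →+* Matrix m m S)]
    {A : Matrix m m R} {B : Matrix m n R} {C : Matrix n m R} {D : Matrix n n R} [Invertible D]
    (h : IsUnit ((fromBlocks A B C D).map f)) : IsUnit (fromBlocks A B C D) := by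
  let : Invertible (D.map f) := Invertible.map (f.mapMatrix : Matrix n n R →+* _) D
  have hschur : (A - B * ⅟D * C).map f = A.map f - B.map f * ⅟(D.map f) * C.map f := by
    rw [Matrix.map_sub _ (map_sub f), Matrix.map_mul, Matrix.map_mul]
    rfl
  rw [fromBlocks_map, isUnit_fromBlocks_iff_of_invertible₂₂', ← hschur] at h
  exact isUnit_fromBlocks_iff_of_invertible₂₂'.2 (h.of_map f.mapMatrix)

theorem isUnit_reindex_iff (e : m ≃ n) (M : Matrix m m R) :
    IsUnit (reindex e e M) ↔ IsUnit M :=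
  MulEquiv.isUnit_map (reindexRingEquiv R e).toMulEquiv

end Blocks

theorem isUnit_of_isUnit_map_of_isUnit_last {R S : Type*} [Ring R] [Ring S] (f : R →+* S) {n : ℕ}
    [IsLocalHom (f.mapMatrix : Matrix (Fin n) (Fin n) R →+* _)]
    {M : Matrix (Fin (n + 1)) (Fin (n + 1)) R} (hM : IsUnit (M.map f))
    (hlast : IsUnit (M (Fin.last n) (Fin.last n))) : IsUnit M := by
  let e : Fin (n + 1) ≃ Fin n ⊕ Fin 1 := finSumFinEquiv.symm
  have hD : IsUnit (reindex e e M).toBlocks₂₂ := by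
    rw [← MulEquiv.isUnit_map uniqueRingEquiv.toMulEquiv]
    exact hlast
  let := hD.invertible
  rw [← isUnit_reindex_iff e, ← fromBlocks_toBlocks (reindex e e M)]
  refine isUnit_fromBlocks_of_isUnit_map f ?_
  rwa [fromBlocks_toBlocks, reindex_apply, ← submatrix_map, ← reindex_apply, isUnit_reindex_iff]

theorem isOpen_setOf_isUnit {n R : Type*} [Fintype n] [DecidableEq n] [NormedRing R]
    [CompleteSpace R] : IsOpen {M : Matrix n n R | IsUnit M} := by
  -- The ℓ∞ operator norm is submultiplicative and induces the product uniformity.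
  let := Matrix.linftyOpNormedRing (n := n) (α := R)
  have : @CompleteSpace (Matrix n n R) PseudoMetricSpace.toUniformSpace :=
    inferInstanceAs (CompleteSpace (n → n → R))
  exact Units.isOpen

theorem denseRange_map {m n α β : Type*} [TopologicalSpace β] {f : α → β} (hf : DenseRange f) :
    DenseRange (fun M : Matrix m n α => M.map f) :=
  DenseRange.piMap fun _ => DenseRange.piMap fun _ => hf

end Matrix

theorem isLocalHom_mapMatrix_of_denseRange {A B : Type*} [Ring A] [NormedRing B] [CompleteSpace B]
    (φ : A →+* B) [IsLocalHom φ] (hφ : DenseRange φ) (n : ℕ) :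
    IsLocalHom (φ.mapMatrix : Matrix (Fin n) (Fin n) A →+* Matrix (Fin n) (Fin n) B) := by
  induction n with
  | zero => exact ⟨fun M _ => isUnit_of_subsingleton M⟩
  | succ n ih =>
    have hopen : IsOpen ({N | IsUnit N} ∩ {N : Matrix (Fin (n + 1)) (Fin (n + 1)) B |
        IsUnit (N (Fin.last n) (Fin.last n))}) :=
      isOpen_setOf_isUnit.inter
        (Units.isOpen.preimage (continuous_id.matrix_elem (Fin.last n) (Fin.last n)))
    refine isLocalHom_of_denseRange (denseRange_map hφ) hopen ⟨isUnit_one, by simp⟩ ?_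
    rintro M ⟨hM, hlast⟩
    exact isUnit_of_isUnit_map_of_isUnit_last φ hM (hlast.of_map φ)

theorem matrix_dense_spectral_of_dense_spectral_general {A B : Type*}
    [NormedRing A] [NormedAlgebra ℂ A]
    [NormedRing B] [NormedAlgebra ℂ B] [CompleteSpace B]
    (φ : A →ₐ[ℂ] B) (hdense : DenseRange φ)
    (hspec : ∀ a : A, spectrum ℂ (φ a) = spectrum ℂ a) :
    ∀ n : ℕ, 1 ≤ n →
      DenseRange (fun M : Matrix (Fin n) (Fin n) A => M.map φ) ∧
      ∀ M : Matrix (Fin n) (Fin n) A, spectrum ℂ (M.map φ) = spectrum ℂ M := by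
  intro n _
  have hφ : IsLocalHom φ := isLocalHom_of_spectrum_apply_eq φ hspec
  have hφn := isLocalHom_mapMatrix_of_denseRange (φ : A →+* B) hdense n
  have : IsLocalHom (φ.mapMatrix : Matrix (Fin n) (Fin n) A →ₐ[ℂ] _) := ⟨hφn.map_nonunit⟩
  exact ⟨denseRange_map hdense, spectrum_apply_eq_of_isLocalHom φ.mapMatrix⟩

/-- (Swan) If `φ : A → B` is a dense and spectral morphism of unital complex Banach algebras,
then for every `n ≥ 1` the induced morphism `M_n(A) → M_n(B)` (applying `φ` entrywise) is a
dense and spectral morphism. -/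
theorem matrix_dense_spectral_of_dense_spectral {A B : Type*}
    [NormedRing A] [NormedAlgebra ℂ A] [CompleteSpace A]
    [NormedRing B] [NormedAlgebra ℂ B] [CompleteSpace B]
    (φ : A →ₐ[ℂ] B) (hcont : Continuous φ) (hdense : DenseRange φ)
    (hspec : ∀ a : A, spectrum ℂ (φ a) = spectrum ℂ a) :
    ∀ n : ℕ, 1 ≤ n →
      DenseRange (fun M : Matrix (Fin n) (Fin n) A => M.map φ) ∧
      ∀ M : Matrix (Fin n) (Fin n) A, spectrum ℂ (M.map φ) = spectrum ℂ M :=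
  matrix_dense_spectral_of_dense_spectral_general φ hdense hspec
end

section
/- Let Ω ⊆ ℂ be an open set containing 0, and for a unital complex Banach algebra A let A_Ω = {a ∈ A : sp_A(a) ⊆ Ω} with the subspace topology. If φ : A → B is a dense and spectral morphism of unital complex Banach algebras, then φ maps A_Ω into B_Ω and the induced map on path components [A_Ω] → [B_Ω] is a bijection. -/
/-!
By upper semicontinuity of the spectrum `B_Ω` is open, and spectrality gives `φ⁻¹(B_Ω) = A_Ω`.
Surjectivity: the path component of `b` in the open, locally path-connected set `B_Ω` is open,
so it meets the dense range of `φ`.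
Injectivity: for `b ∈ B_Ω`, all `a` with `φ a` in some ball around `b` inside `B_Ω` lie in one
path component of `A_Ω`, as preimages of balls are convex. This component depends locally
constantly on `b`, so it is constant along a path in `B_Ω` from `φ a₀` to `φ a₁`.
-/

/-- The map induced on path components by a continuous map. -/
def pi0Map {X Y : Type*} [TopologicalSpace X] [TopologicalSpace Y] {f : X → Y}
    (hf : Continuous f) : ZerothHomotopy X → ZerothHomotopy Y :=
  Quotient.map f (fun _ _ h => Nonempty.map (fun p => p.map hf) h)

/-- The map `A_Ω → B_Ω` induced by a spectral morphism `φ`. -/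
def specSetMap {A B : Type*} [NormedRing A] [NormedAlgebra ℂ A] [CompleteSpace A]
    [NormedRing B] [NormedAlgebra ℂ B] [CompleteSpace B] (Ω : Set ℂ) (φ : A →ₐ[ℂ] B)
    (hspec : ∀ a : A, spectrum ℂ (φ a) = spectrum ℂ a) :
    {a : A // spectrum ℂ a ⊆ Ω} → {b : B // spectrum ℂ b ⊆ Ω} :=
  fun a => ⟨φ a.1, by rw [hspec]; exact a.2⟩

lemma continuous_specSetMap {A B : Type*} [NormedRing A] [NormedAlgebra ℂ A] [CompleteSpace A]
    [NormedRing B] [NormedAlgebra ℂ B] [CompleteSpace B] (Ω : Set ℂ) (φ : A →ₐ[ℂ] B)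
    (hcont : Continuous φ) (hspec : ∀ a : A, spectrum ℂ (φ a) = spectrum ℂ a) :
    Continuous (specSetMap Ω φ hspec) :=
  (hcont.comp continuous_subtype_val).subtype_mk _

open Metric Set Function Topology

section pi0Map

variable {X Y : Type*} [TopologicalSpace X] [TopologicalSpace Y] {f : X → Y} (hf : Continuous f)

lemma pi0Map_injective_of_joined (h : ∀ x y, Joined (f x) (f y) → Joined x y) :
    Injective (pi0Map hf) := by
  rintro ⟨x⟩ ⟨y⟩ hxy
  exact Quotient.sound (h x y (Quotient.exact hxy))

lemma pi0Map_surjective_of_joined (h : ∀ y, ∃ x, Joined (f x) y) :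
    Surjective (pi0Map hf) := by
  rintro ⟨y⟩
  obtain ⟨x, hx⟩ := h y
  exact ⟨⟦x⟧, Quotient.sound hx⟩

end pi0Map

lemma isOpen_setOf_spectrum_subset {𝕜 A : Type*} [NormedField 𝕜] [ProperSpace 𝕜]
    [NormedRing A] [NormedAlgebra 𝕜 A] [CompleteSpace A] {Ω : Set 𝕜} (hΩ : IsOpen Ω) :
    IsOpen {a : A | spectrum 𝕜 a ⊆ Ω} :=
  upperHemicontinuous_iff_isOpen_preimage_Iic.1 (upperHemicontinuous_spectrum 𝕜 A) Ω hΩ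

lemma DenseRange.exists_joinedIn {X Y : Type*} [TopologicalSpace Y] [LocallyPathConnectedSpace Y]
    {f : X → Y} (hf : DenseRange f) {U : Set Y} (hU : IsOpen U) {y : Y} (hy : y ∈ U) :
    ∃ x, JoinedIn U y (f x) :=
  hf.exists_mem_open (hU.pathComponentIn y) ⟨y, mem_pathComponentIn_self hy⟩

section ApproximantsIn

variable {E F : Type*} [PseudoMetricSpace F] (φ : E → F) {U : Set F}

def approximantsIn (U : Set F) (b : F) : Set E :=
  {a | ∃ r > 0, ball b r ⊆ U ∧ φ a ∈ ball b r}

lemma mem_approximantsIn_self (hU : IsOpen U) {a : E} (ha : φ a ∈ U) :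
    a ∈ approximantsIn φ U (φ a) :=
  let ⟨r, hr, hball⟩ := Metric.isOpen_iff.1 hU _ ha
  ⟨r, hr, hball, mem_ball_self hr⟩

lemma eventually_nonempty_approximantsIn_inter (hφ : DenseRange φ) (hU : IsOpen U) {b : F}
    (hb : b ∈ U) : ∀ᶠ b' in 𝓝 b, (approximantsIn φ U b ∩ approximantsIn φ U b').Nonempty := by
  obtain ⟨r, hr, hball⟩ := Metric.isOpen_iff.1 hU b hb
  filter_upwards [ball_mem_nhds b (half_pos hr)] with b' hb'
  have hsub : ball b' (r / 2) ⊆ ball b r := ball_subset_ball' (by linarith [mem_ball.1 hb'])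
  obtain ⟨a, ha⟩ := hφ.exists_mem_open isOpen_ball ⟨b', mem_ball_self (half_pos hr)⟩
  exact ⟨a, ⟨r, hr, hball, hsub ha⟩, ⟨r / 2, half_pos hr, hsub.trans hball, ha⟩⟩

end ApproximantsIn

section DenseLinearMap

variable {E F : Type*} [AddCommGroup E] [Module ℝ E] [TopologicalSpace E] [ContinuousAdd E]
  [ContinuousSMul ℝ E] [SeminormedAddCommGroup F] [NormedSpace ℝ F] (φ : E →ₗ[ℝ] F) {U : Set F}

lemma joinedIn_preimage_of_mem_ball {b : F} {r : ℝ} (hr : ball b r ⊆ U) {a a' : E}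
    (ha : φ a ∈ ball b r) (ha' : φ a' ∈ ball b r) : JoinedIn (φ ⁻¹' U) a a' :=
  ((((convex_ball b r).linear_preimage φ).isPathConnected ⟨a, ha⟩).joinedIn a ha a' ha').mono
    (preimage_mono hr)

lemma joinedIn_preimage_of_mem_approximantsIn {b : F} {a a' : E}
    (ha : a ∈ approximantsIn φ U b) (ha' : a' ∈ approximantsIn φ U b) :
    JoinedIn (φ ⁻¹' U) a a' := by
  obtain ⟨r, -, hr, ha⟩ := ha
  obtain ⟨r', -, hr', ha'⟩ := ha'
  rcases le_total r r' with h | h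
  · exact joinedIn_preimage_of_mem_ball φ hr' (ball_subset_ball h ha) ha'
  · exact joinedIn_preimage_of_mem_ball φ hr ha (ball_subset_ball h ha')

lemma joinedIn_preimage_of_nonempty_approximantsIn_inter {b b' : F}
    (hbb' : (approximantsIn φ U b ∩ approximantsIn φ U b').Nonempty) {a a' : E}
    (ha : a ∈ approximantsIn φ U b) (ha' : a' ∈ approximantsIn φ U b') :
    JoinedIn (φ ⁻¹' U) a a' :=
  let ⟨_, hc, hc'⟩ := hbb'
  (joinedIn_preimage_of_mem_approximantsIn φ ha hc).trans
    (joinedIn_preimage_of_mem_approximantsIn φ hc' ha')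

theorem joinedIn_preimage_of_denseRange (hφ : DenseRange φ) (hU : IsOpen U) {a₀ a₁ : E}
    (h : JoinedIn U (φ a₀) (φ a₁)) : JoinedIn (φ ⁻¹' U) a₀ a₁ := by
  obtain ⟨p, hp⟩ := h
  let R : F → F → Prop := fun b b' => ∀ a ∈ approximantsIn φ U b, ∀ a' ∈ approximantsIn φ U b',
    JoinedIn (φ ⁻¹' U) a a'
  have hR : ∀ s t, R (p s) (p t) := by
    refine PreconnectedSpace.induction₂' _ (fun s => ?_) ⟨fun s t u hst htu => ?_⟩
    · filter_upwards [p.continuous.continuousAt.eventually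
        (eventually_nonempty_approximantsIn_inter φ hφ hU (hp s))] with t hst
      exact ⟨fun a ha a' ha' => joinedIn_preimage_of_nonempty_approximantsIn_inter φ hst ha ha',
        fun a ha a' ha' =>
          joinedIn_preimage_of_nonempty_approximantsIn_inter φ (inter_comm .. ▸ hst) ha ha'⟩
    · obtain ⟨c, -, hc⟩ := (eventually_nonempty_approximantsIn_inter φ hφ hU (hp t)).self_of_nhds
      exact fun a ha a'' ha'' => (hst a ha c hc).trans (htu c hc a'' ha'')
  have hR01 := hR 0 1
  rw [p.source, p.target] at hR01
  exact hR01 a₀ (mem_approximantsIn_self φ hU (p.source ▸ hp 0))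
    a₁ (mem_approximantsIn_self φ hU (p.target ▸ hp 1))

end DenseLinearMap

theorem pi0_specSet_bijective_of_dense_spectral_general {A B : Type*}
    [NormedRing A] [NormedAlgebra ℂ A] [CompleteSpace A]
    [NormedRing B] [NormedAlgebra ℂ B] [CompleteSpace B]
    (Ω : Set ℂ) (hΩ : IsOpen Ω)
    (φ : A →ₐ[ℂ] B) (hcont : Continuous φ) (hdense : DenseRange φ)
    (hspec : ∀ a : A, spectrum ℂ (φ a) = spectrum ℂ a) :
    (∀ a : A, spectrum ℂ a ⊆ Ω → spectrum ℂ (φ a) ⊆ Ω) ∧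
    Function.Bijective (pi0Map (continuous_specSetMap Ω φ hcont hspec)) := by
  have hU : IsOpen {b : B | spectrum ℂ b ⊆ Ω} := isOpen_setOf_spectrum_subset hΩ
  have hpre : φ ⁻¹' {b : B | spectrum ℂ b ⊆ Ω} = {a : A | spectrum ℂ a ⊆ Ω} := by
    ext a
    simp only [mem_preimage, mem_ofPred_eq, hspec]
  refine ⟨fun a ha => hspec a ▸ ha, pi0Map_injective_of_joined _ fun a₀ a₁ h => ?_,
    pi0Map_surjective_of_joined _ fun b => ?_⟩
  · have h' := joinedIn_preimage_of_denseRange (φ.toLinearMap.restrictScalars ℝ) hdense hU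
      ((joinedIn_iff_joined _ _).2 h)
    exact (h'.mono hpre.subset).joined_subtype
  · obtain ⟨a, ha⟩ := hdense.exists_joinedIn hU b.2
    have ha' : spectrum ℂ a ⊆ Ω := hpre.subset ha.mem.2
    exact ⟨⟨a, ha'⟩, ha.symm.joined_subtype⟩

/-- If `Ω ⊆ ℂ` is open with `0 ∈ Ω` and `φ : A → B` is a dense and spectral morphism of unital
complex Banach algebras, then `φ` maps `A_Ω = {a : spectrum a ⊆ Ω}` into `B_Ω`, and the
induced map on path components `[A_Ω] → [B_Ω]` is a bijection. -/
theorem pi0_specSet_bijective_of_dense_spectral {A B : Type*}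
    [NormedRing A] [NormedAlgebra ℂ A] [CompleteSpace A]
    [NormedRing B] [NormedAlgebra ℂ B] [CompleteSpace B]
    (Ω : Set ℂ) (hΩ : IsOpen Ω) (h0 : (0 : ℂ) ∈ Ω)
    (φ : A →ₐ[ℂ] B) (hcont : Continuous φ) (hdense : DenseRange φ)
    (hspec : ∀ a : A, spectrum ℂ (φ a) = spectrum ℂ a) :
    (∀ a : A, spectrum ℂ a ⊆ Ω → spectrum ℂ (φ a) ⊆ Ω) ∧
    Function.Bijective (pi0Map (continuous_specSetMap Ω φ hcont hspec)) :=
  pi0_specSet_bijective_of_dense_spectral_general Ω hΩ φ hcont hdense hspec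
end

section
/- (Bost) Let φ : A → B be a dense and spectral morphism of unital complex Banach algebras. Then for every n ≥ 1 the continuous map GL_n(A) → GL_n(B) induced by φ is a homotopy equivalence of topological spaces. -/
/-!
Because `φ` is spectral it reflects invertibility. Near the identity this passes to matrices by
induction on the size, splitting off a block whose Schur complement is again close to the
identity; density then moves any `x` with `Mₙ(φ) x` invertible close to the identity by
multiplying with a preimage of an approximate inverse. Hence `GLₙ(A)` is the preimage of the open
set `GLₙ(B)` under the real-linear map `Mₙ(φ)`, whose range is dense. A partition of unity gives a
continuous `G : GLₙ(B) → Mₙ(A)` such that each `y` and `Mₙ(φ) (G y)` lie in a common ball inside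
`GLₙ(B)`, and straight-line homotopies then make `G` a homotopy inverse of `Mₙ(φ)`.
-/

/-- `GL_n(A)`: the group of invertible `n × n` matrices over `A`, topologized as a
subspace of `M_n(A)`. -/
abbrev GLn (A : Type*) [Ring A] [TopologicalSpace A] (n : ℕ) : Type _ :=
  {M : Matrix (Fin n) (Fin n) A // IsUnit M}

/-- The map `GL_n(A) → GL_n(B)` induced by a ring morphism `A → B` (applied entrywise). -/
def glMap {A B : Type*} [Ring A] [Ring B] [TopologicalSpace A] [TopologicalSpace B]
    (φ : A →+* B) (n : ℕ) : GLn A n → GLn B n :=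
  fun M => ⟨M.1.map φ, φ.mapMatrix.isUnit_map M.2⟩

lemma continuous_glMap {A B : Type*} [Ring A] [Ring B] [TopologicalSpace A] [TopologicalSpace B]
    (φ : A →+* B) (n : ℕ) (hφ : Continuous φ) : Continuous (glMap φ n) :=
  (continuous_subtype_val.matrix_map hφ).subtype_mk _

open Filter Topology Matrix

theorem isUnit_of_isUnit_mul_of_isUnit_mul_s8 {M : Type*} [Monoid M] {x y : M}
    (hxy : IsUnit (x * y)) (hyx : IsUnit (y * x)) : IsUnit x := by
  have hr : x * (y * ↑hxy.unit⁻¹) = 1 := by rw [← mul_assoc]; exact hxy.mul_val_inv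
  have hl : (↑hyx.unit⁻¹ * y) * x = 1 := by rw [mul_assoc]; exact hyx.val_inv_mul
  exact isUnit_iff_exists.2 ⟨_, hr, left_inv_eq_right_inv hl hr ▸ hl⟩

theorem AlgHom.isLocalHom_of_spectrum_subset {R A B : Type*} [CommSemiring R] [Ring A] [Ring B]
    [Algebra R A] [Algebra R B] (φ : A →ₐ[R] B) (h : ∀ a, spectrum R a ⊆ spectrum R (φ a)) :
    IsLocalHom φ.toRingHom :=
  ⟨fun a ha => by
    rw [← spectrum.zero_notMem_iff R] at ha ⊢
    exact fun h0 => ha (h a h0)⟩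

theorem DenseRange.matrix_map {m n α β : Type*} [TopologicalSpace β] {f : α → β}
    (hf : DenseRange f) : DenseRange fun x : Matrix m n α => x.map f :=
  DenseRange.piMap fun _ => DenseRange.piMap fun _ => hf

namespace Matrix

variable {m p α β : Type*}

@[simp]
theorem toBlocks₁₁_one [DecidableEq m] [DecidableEq p] [Zero α] [One α] :
    (1 : Matrix (m ⊕ p) (m ⊕ p) α).toBlocks₁₁ = 1 := by
  rw [← fromBlocks_one, toBlocks_fromBlocks₁₁]

theorem continuous_toBlocks₁₁ [TopologicalSpace α] :
    Continuous fun x : Matrix (m ⊕ p) (m ⊕ p) α => x.toBlocks₁₁ :=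
  continuous_id.matrix_submatrix _ _

variable [Fintype m] [DecidableEq m]

noncomputable def schurComplement₁₁ [Ring α] (x : Matrix (m ⊕ p) (m ⊕ p) α) : Matrix p p α :=
  x.toBlocks₂₂ - x.toBlocks₂₁ * Ring.inverse x.toBlocks₁₁ * x.toBlocks₁₂

section Units

variable [Fintype p] [DecidableEq p] [Ring α]

theorem isUnit_fromBlocks_zero_zero {a : Matrix m m α} {d : Matrix p p α} (ha : IsUnit a)
    (hd : IsUnit d) : IsUnit (fromBlocks a 0 0 d) := by
  obtain ⟨u, rfl⟩ := ha
  obtain ⟨v, rfl⟩ := hd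
  exact ⟨⟨fromBlocks (u : Matrix m m α) 0 0 (v : Matrix p p α),
    fromBlocks (↑u⁻¹ : Matrix m m α) 0 0 (↑v⁻¹ : Matrix p p α),
    by simp [fromBlocks_multiply], by simp [fromBlocks_multiply]⟩, rfl⟩

theorem isUnit_fromBlocks_one_zero₁₂_one (c : Matrix p m α) :
    IsUnit (fromBlocks (1 : Matrix m m α) 0 c (1 : Matrix p p α)) :=
  ⟨⟨fromBlocks 1 0 c 1, fromBlocks (1 : Matrix m m α) 0 (-c) (1 : Matrix p p α),
    by simp [fromBlocks_multiply], by simp [fromBlocks_multiply]⟩, rfl⟩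

theorem isUnit_fromBlocks_one_zero₂₁_one (b : Matrix m p α) :
    IsUnit (fromBlocks (1 : Matrix m m α) b 0 (1 : Matrix p p α)) :=
  ⟨⟨fromBlocks 1 b 0 1, fromBlocks (1 : Matrix m m α) (-b) 0 (1 : Matrix p p α),
    by simp [fromBlocks_multiply], by simp [fromBlocks_multiply]⟩, rfl⟩

theorem isUnit_of_isUnit_toBlocks₁₁ {x : Matrix (m ⊕ p) (m ⊕ p) α} (h₁₁ : IsUnit x.toBlocks₁₁)
    (hschur : IsUnit x.schurComplement₁₁) : IsUnit x := by
  set a' := Ring.inverse x.toBlocks₁₁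
  have hcancel : x.toBlocks₁₁ * (a' * x.toBlocks₁₂) = x.toBlocks₁₂ := by
    rw [← Matrix.mul_assoc, Ring.mul_inverse_cancel _ h₁₁, Matrix.one_mul]
  have hfactor : x = fromBlocks 1 0 (x.toBlocks₂₁ * a') 1 *
      fromBlocks x.toBlocks₁₁ 0 0 x.schurComplement₁₁ * fromBlocks 1 (a' * x.toBlocks₁₂) 0 1 := by
    conv_lhs => rw [← fromBlocks_toBlocks x]
    simp [fromBlocks_multiply, schurComplement₁₁, Matrix.mul_assoc, Ring.inverse_mul_cancel _ h₁₁,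
      hcancel, a']
  rw [hfactor]
  exact ((isUnit_fromBlocks_one_zero₁₂_one _).mul (isUnit_fromBlocks_zero_zero h₁₁ hschur)).mul
    (isUnit_fromBlocks_one_zero₂₁_one _)

end Units

theorem schurComplement₁₁_map [Ring α] [Ring β] (f : α →+* β) {x : Matrix (m ⊕ p) (m ⊕ p) α}
    (h₁₁ : IsUnit x.toBlocks₁₁) :
    (x.map f).schurComplement₁₁ = x.schurComplement₁₁.map f := by
  have hinv : Ring.inverse (x.map f).toBlocks₁₁ = (Ring.inverse x.toBlocks₁₁).map f := by
    obtain ⟨u, hu⟩ := h₁₁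
    have : (x.map f).toBlocks₁₁ =
        ↑(Units.map (f.mapMatrix : Matrix m m α →+* Matrix m m β).toMonoidHom u) := by
      rw [Units.coe_map, hu]; rfl
    rw [this, ← hu, Ring.inverse_unit, Ring.inverse_unit]
    rfl
  simp only [schurComplement₁₁, hinv, Matrix.map_sub _ (map_sub f), Matrix.map_mul]
  rfl

theorem tendsto_schurComplement₁₁_one [Fintype p] [DecidableEq p] [Ring α] [TopologicalSpace α]
    [IsTopologicalRing α] (hinv : ContinuousAt Ring.inverse (1 : Matrix m m α)) :
    Tendsto schurComplement₁₁ (𝓝 (1 : Matrix (m ⊕ p) (m ⊕ p) α)) (𝓝 1) := by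
  have h₁₂ : Continuous fun x : Matrix (m ⊕ p) (m ⊕ p) α => x.toBlocks₁₂ :=
    continuous_id.matrix_submatrix _ _
  have h₂₁ : Continuous fun x : Matrix (m ⊕ p) (m ⊕ p) α => x.toBlocks₂₁ :=
    continuous_id.matrix_submatrix _ _
  have h₂₂ : Continuous fun x : Matrix (m ⊕ p) (m ⊕ p) α => x.toBlocks₂₂ :=
    continuous_id.matrix_submatrix _ _
  have hg : Continuous fun q : Matrix (m ⊕ p) (m ⊕ p) α × Matrix m m α =>
      q.1.toBlocks₂₂ - q.1.toBlocks₂₁ * q.2 * q.1.toBlocks₁₂ :=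
    (h₂₂.comp continuous_fst).sub
      (((h₂₁.comp continuous_fst).matrix_mul continuous_snd).matrix_mul (h₁₂.comp continuous_fst))
  have key : ContinuousAt schurComplement₁₁ (1 : Matrix (m ⊕ p) (m ⊕ p) α) :=
    hg.continuousAt.comp (continuousAt_id.prodMk
      (hinv.comp_of_eq continuous_toBlocks₁₁.continuousAt toBlocks₁₁_one))
  simpa [schurComplement₁₁, ContinuousAt, ← fromBlocks_one] using key

section Normed

variable {S : Type*} [NormedRing S] [CompleteSpace S]

/- The `ℓ∞` operator norm induces the product uniformity on matrices, so facts about complete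
normed rings apply. -/
theorem continuousAt_ringInverse_one : ContinuousAt Ring.inverse (1 : Matrix m m S) := by
  let _ := Matrix.linftyOpNormedRing (n := m) (α := S)
  have : @CompleteSpace (Matrix m m S) PseudoMetricSpace.toUniformSpace :=
    instCompleteSpace _ _ _
  exact NormedRing.inverse_continuousAt (1 : (Matrix m m S)ˣ)

theorem isOpen_setOf_isUnit_s8 : IsOpen {x : Matrix m m S | IsUnit x} := by
  let _ := Matrix.linftyOpNormedRing (n := m) (α := S)
  have : @CompleteSpace (Matrix m m S) PseudoMetricSpace.toUniformSpace :=
    instCompleteSpace _ _ _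
  exact Units.isOpen

end Normed

end Matrix

namespace RingHom

variable {R S : Type*} [Ring R]

/-- The induction on the matrix size runs on this property rather than on `IsLocalHom`, because
the Schur complement of a matrix near `1` is again near `1`. -/
def ReflectsUnitsNearOne [Ring S] [TopologicalSpace S] (f : R →+* S) : Prop :=
  ∀ᶠ x in (𝓝 1).comap f, IsUnit x

theorem isLocalHom_of_reflectsUnitsNearOne [Ring S] [TopologicalSpace S] [ContinuousMul S]
    {f : R →+* S} (hf : f.ReflectsUnitsNearOne) (hdense : DenseRange f) : IsLocalHom f := by
  refine ⟨fun x hx => ?_⟩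
  obtain ⟨N, hN, hNunit⟩ := Filter.mem_comap.1 hf
  obtain ⟨w, hxw, hwx⟩ := isUnit_iff_exists.1 hx
  -- approximate the inverse `w` of `f x` by some `f y`: then `f (x * y)` and `f (y * x)` lie in `N`
  have hO : {z | f x * z ∈ N} ∩ {z | z * f x ∈ N} ∈ 𝓝 w :=
    inter_mem ((continuous_const_mul (f x)).continuousAt.preimage_mem_nhds (by rwa [hxw]))
      ((continuous_mul_const (f x)).continuousAt.preimage_mem_nhds (by rwa [hwx]))
  obtain ⟨_, ⟨y, rfl⟩, hxy, hyx⟩ := hdense.inter_nhds_nonempty hO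
  exact isUnit_of_isUnit_mul_of_isUnit_mul_s8 (hNunit (by simpa using hxy))
    (hNunit (by simpa using hyx))

theorem reflectsUnitsNearOne_of_isLocalHom [NormedRing S] [HasSummableGeomSeries S]
    (f : R →+* S) [IsLocalHom f] : f.ReflectsUnitsNearOne :=
  eventually_comap.2 <| eventually_of_mem (Units.isOpen.mem_nhds isUnit_one) fun _ hy _ hx =>
    isUnit_of_map_unit f _ (hx ▸ hy)

section Matrix

variable [Ring S] [TopologicalSpace S] (f : R →+* S)
  {m n p : Type*} [Fintype m] [DecidableEq m] [Fintype n] [DecidableEq n]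
  [Fintype p] [DecidableEq p]

theorem reflectsUnitsNearOne_mapMatrix_of_unique [Unique m] (hf : f.ReflectsUnitsNearOne) :
    (f.mapMatrix : Matrix m m R →+* Matrix m m S).ReflectsUnitsNearOne := by
  have hentry : Tendsto (fun x : Matrix m m R => x default default)
      ((𝓝 1).comap f.mapMatrix) ((𝓝 1).comap f) := by
    have heval : Tendsto (fun y : Matrix m m S => y default default) (𝓝 1) (𝓝 1) := by
      simpa using (continuous_id.matrix_elem default default).tendsto (1 : Matrix m m S)
    exact tendsto_comap_iff.2 (heval.comp tendsto_comap)
  refine (hentry.eventually hf).mono fun x hx => ?_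
  have hscalar : x = scalar m (x default default) := by
    ext i j
    simp [Subsingleton.elim i default, Subsingleton.elim j default]
  exact hscalar ▸ (scalar m).isUnit_map hx

theorem reflectsUnitsNearOne_mapMatrix_of_equiv (e : m ≃ n)
    (h : (f.mapMatrix : Matrix m m R →+* Matrix m m S).ReflectsUnitsNearOne) :
    (f.mapMatrix : Matrix n n R →+* Matrix n n S).ReflectsUnitsNearOne := by
  have hreindex : Tendsto (fun x : Matrix n n R => x.submatrix e e)
      ((𝓝 1).comap (f.mapMatrix : Matrix n n R →+* Matrix n n S))
      ((𝓝 1).comap (f.mapMatrix : Matrix m m R →+* Matrix m m S)) := by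
    have hcont : Tendsto (fun x : Matrix n n S => x.submatrix e e) (𝓝 1) (𝓝 1) := by
      simpa using (continuous_id.matrix_reindex e.symm e.symm).tendsto (1 : Matrix n n S)
    exact tendsto_comap_iff.2 (hcont.comp tendsto_comap)
  exact (hreindex.eventually h).mono fun x hx =>
    (MulEquiv.isUnit_map (reindexRingEquiv R e.symm)).1 hx

theorem reflectsUnitsNearOne_mapMatrix_sum [IsTopologicalRing S]
    (hinv : ContinuousAt Ring.inverse (1 : Matrix m m S))
    (hm : (f.mapMatrix : Matrix m m R →+* Matrix m m S).ReflectsUnitsNearOne)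
    (hp : (f.mapMatrix : Matrix p p R →+* Matrix p p S).ReflectsUnitsNearOne) :
    (f.mapMatrix : Matrix (m ⊕ p) (m ⊕ p) R →+* _).ReflectsUnitsNearOne := by
  set l := (𝓝 1).comap (f.mapMatrix : Matrix (m ⊕ p) (m ⊕ p) R →+* _)
  have hmap : Tendsto (fun x : Matrix (m ⊕ p) (m ⊕ p) R => x.map f) l (𝓝 1) := tendsto_comap
  have h₁₁ : ∀ᶠ x in l, IsUnit x.toBlocks₁₁ := by
    have hblock : Tendsto (fun x : Matrix (m ⊕ p) (m ⊕ p) R => x.toBlocks₁₁) l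
        ((𝓝 1).comap (f.mapMatrix : Matrix m m R →+* Matrix m m S)) := by
      rw [tendsto_comap_iff]
      show Tendsto (fun x : Matrix (m ⊕ p) (m ⊕ p) R => (x.map f).toBlocks₁₁) l (𝓝 1)
      have hcont := (continuous_toBlocks₁₁ (m := m) (p := p) (α := S)).tendsto 1
      rw [toBlocks₁₁_one] at hcont
      exact hcont.comp hmap
    exact hblock.eventually hm
  have hschur : ∀ᶠ x in l, ∀ y : Matrix p p R, y.map f = (x.map f).schurComplement₁₁ → IsUnit y :=
    ((tendsto_schurComplement₁₁_one hinv).comp hmap).eventually (eventually_comap.1 hp)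
  filter_upwards [h₁₁, hschur] with x hx₁₁ hx
  exact isUnit_of_isUnit_toBlocks₁₁ hx₁₁ (hx _ (schurComplement₁₁_map f hx₁₁).symm)

end Matrix

section Normed

variable [NormedRing S] [CompleteSpace S] (f : R →+* S) [IsLocalHom f]
  {ι : Type*} [Fintype ι] [DecidableEq ι]

theorem reflectsUnitsNearOne_mapMatrix :
    (f.mapMatrix : Matrix ι ι R →+* Matrix ι ι S).ReflectsUnitsNearOne := by
  suffices hfin : ∀ n, (f.mapMatrix : Matrix (Fin n) (Fin n) R →+* _).ReflectsUnitsNearOne from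
    f.reflectsUnitsNearOne_mapMatrix_of_equiv (Fintype.equivFin ι).symm (hfin _)
  intro n
  induction n with
  | zero => exact Eventually.of_forall fun x => isUnit_of_subsingleton x
  | succ n ih =>
    exact f.reflectsUnitsNearOne_mapMatrix_of_equiv finSumFinEquiv
      (f.reflectsUnitsNearOne_mapMatrix_sum Matrix.continuousAt_ringInverse_one ih
        (f.reflectsUnitsNearOne_mapMatrix_of_unique f.reflectsUnitsNearOne_of_isLocalHom))

theorem isLocalHom_mapMatrix_s8 (hf : DenseRange f) :
    IsLocalHom (f.mapMatrix : Matrix ι ι R →+* Matrix ι ι S) :=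
  isLocalHom_of_reflectsUnitsNearOne f.reflectsUnitsNearOne_mapMatrix hf.matrix_map

end Normed

end RingHom

section Homotopy

variable {E F : Type*} [AddCommGroup E] [Module ℝ E] [TopologicalSpace E]
  [IsTopologicalAddGroup E] [ContinuousSMul ℝ E] [NormedAddCommGroup F] [NormedSpace ℝ F]

theorem ContinuousMap.homotopic_of_segment_subset {X : Type*} [TopologicalSpace X] {s : Set E}
    {f g : C(X, s)} (h : ∀ x, segment ℝ (f x : E) (g x) ⊆ s) : f.Homotopic g := by
  let val : C(s, E) := ⟨Subtype.val, continuous_subtype_val⟩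
  let H := ContinuousMap.Homotopy.affine (val.comp f) (val.comp g)
  exact ⟨{ toFun := fun q => ⟨H q, h q.2 (by
              rw [ContinuousMap.Homotopy.affine_apply]
              exact lineMap_mem_segment ℝ _ _ q.1.2)⟩
           continuous_toFun := H.continuous.subtype_mk _
           map_zero_left := fun x => Subtype.ext (H.apply_zero x)
           map_one_left := fun x => Subtype.ext (H.apply_one x) }⟩

theorem exists_continuous_segment_subset (L : E →ₗ[ℝ] F) (hL : DenseRange L) {V : Set F}
    (hV : IsOpen V) : ∃ G : C(V, E), ∀ y : V, segment ℝ (L (G y)) y ⊆ V := by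
  -- the preimage of a union of concentric balls around `y`, hence convex
  let t : V → Set E := fun y => {x | ∃ r, Metric.ball (y : F) r ⊆ V ∧ L x ∈ Metric.ball (y : F) r}
  have ht : ∀ y, Convex ℝ (t y) := by
    rintro y x₁ ⟨r₁, hr₁, hx₁⟩ x₂ ⟨r₂, hr₂, hx₂⟩ a b ha hb hab
    refine ⟨max r₁ r₂, ?_, ?_⟩
    · rcases max_choice r₁ r₂ with h | h <;> rwa [h]
    · rw [map_add, map_smul, map_smul]
      exact convex_ball _ _ (Metric.ball_subset_ball (le_max_left _ _) hx₁)
        (Metric.ball_subset_ball (le_max_right _ _) hx₂) ha hb hab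
  have hlocal : ∀ y, ∃ c, ∀ᶠ z in 𝓝 y, c ∈ t z := by
    intro y
    obtain ⟨ρ, hρ, hball⟩ := Metric.isOpen_iff.1 hV y y.2
    obtain ⟨c, hc⟩ := hL.exists_dist_lt (y : F) (div_pos hρ three_pos)
    refine ⟨c, ?_⟩
    have hnear : ∀ᶠ z : V in 𝓝 y, dist (z : F) y < ρ / 3 :=
      continuous_subtype_val.continuousAt (Metric.ball_mem_nhds _ (div_pos hρ three_pos))
    filter_upwards [hnear] with z hz
    refine ⟨2 * ρ / 3, fun w hw => hball ?_, ?_⟩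
    · rw [Metric.mem_ball] at hw ⊢
      linarith [dist_triangle w z y]
    · rw [Metric.mem_ball]
      linarith [dist_triangle (L c) y z, dist_comm (y : F) (z : F), dist_comm (y : F) (L c)]
  obtain ⟨G, hG⟩ := exists_continuous_forall_mem_convex_of_local_const ht hlocal
  refine ⟨G, fun y => ?_⟩
  obtain ⟨r, hr, hGy⟩ := hG y
  exact ((convex_ball _ _).segment_subset hGy
    (Metric.mem_ball_self (Metric.pos_of_mem_ball hGy))).trans hr

theorem exists_homotopy_inverse_of_denseRange (L : E →ₗ[ℝ] F) (hL : DenseRange L) {U : Set E}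
    {V : Set F} (hV : IsOpen V) (hU : L ⁻¹' V ⊆ U) (L' : C(U, V)) (hL' : ∀ x, (L' x : F) = L x) :
    ∃ G : C(V, U), (L'.comp G).Homotopic (ContinuousMap.id V) ∧
      (G.comp L').Homotopic (ContinuousMap.id U) := by
  obtain ⟨G, hG⟩ := exists_continuous_segment_subset L hL hV
  have hGU : ∀ y, G y ∈ U := fun y => hU (hG y (left_mem_segment ℝ _ _))
  refine ⟨⟨fun y => ⟨G y, hGU y⟩, G.continuous.subtype_mk _⟩,
    ContinuousMap.homotopic_of_segment_subset fun y => ?_,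
    ContinuousMap.homotopic_of_segment_subset fun x => ?_⟩
  · simpa [hL'] using hG y
  · intro z hz
    apply hU
    obtain ⟨a, b, ha, hb, hab, rfl⟩ := hz
    exact hG (L' x) ⟨a, b, ha, hb, hab, by simp [hL']⟩

end Homotopy

theorem bost_homotopyEquiv_GL_general {A B : Type*}
    [NormedRing A] [NormedAlgebra ℂ A]
    [NormedRing B] [NormedAlgebra ℂ B] [CompleteSpace B]
    (φ : A →ₐ[ℂ] B) (hcont : Continuous φ) (hdense : DenseRange φ)
    (hspec : ∀ a : A, spectrum ℂ (φ a) = spectrum ℂ a) :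
    ∀ n : ℕ, 1 ≤ n →
      ∃ G : C(GLn B n, GLn A n),
        ((⟨glMap φ.toRingHom n, continuous_glMap _ n hcont⟩ :
            C(GLn A n, GLn B n)).comp G).Homotopic (ContinuousMap.id _) ∧
        (G.comp (⟨glMap φ.toRingHom n, continuous_glMap _ n hcont⟩ :
            C(GLn A n, GLn B n))).Homotopic (ContinuousMap.id _) := by
  intro n _
  have := φ.isLocalHom_of_spectrum_subset fun a => (hspec a).superset
  have := φ.toRingHom.isLocalHom_mapMatrix_s8 (ι := Fin n) hdense
  -- any of the standard matrix norms induces the product topology used in `GLn`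
  let _ : NormedAddCommGroup (Matrix (Fin n) (Fin n) B) := Matrix.normedAddCommGroup
  let _ : NormedSpace ℝ (Matrix (Fin n) (Fin n) B) := Matrix.normedSpace
  refine exists_homotopy_inverse_of_denseRange (φ.restrictScalars ℝ).mapMatrix.toLinearMap ?_
    Matrix.isOpen_setOf_isUnit_s8 ?_ _ fun _ => rfl
  · exact hdense.matrix_map
  · exact fun x hx => isUnit_of_map_unit φ.toRingHom.mapMatrix x hx

/-- (Bost) If `φ : A → B` is a dense and spectral morphism of unital complex Banach algebras,
then for every `n ≥ 1` the induced map `GL_n(A) → GL_n(B)` is a homotopy equivalence. -/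
theorem bost_homotopyEquiv_GL {A B : Type*}
    [NormedRing A] [NormedAlgebra ℂ A] [CompleteSpace A]
    [NormedRing B] [NormedAlgebra ℂ B] [CompleteSpace B]
    (φ : A →ₐ[ℂ] B) (hcont : Continuous φ) (hdense : DenseRange φ)
    (hspec : ∀ a : A, spectrum ℂ (φ a) = spectrum ℂ a) :
    ∀ n : ℕ, 1 ≤ n →
      ∃ G : C(GLn B n, GLn A n),
        ((⟨glMap φ.toRingHom n, continuous_glMap _ n hcont⟩ :
            C(GLn A n, GLn B n)).comp G).Homotopic (ContinuousMap.id _) ∧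
        (G.comp (⟨glMap φ.toRingHom n, continuous_glMap _ n hcont⟩ :
            C(GLn A n, GLn B n))).Homotopic (ContinuousMap.id _) :=
  bost_homotopyEquiv_GL_general φ hcont hdense hspec
end

section
/- Let A and B be unital commutative complex Banach algebras and let φ : A → B be a dense and spectral morphism. Then the map χ ↦ χ ∘ φ is a homeomorphism from the maximal ideal space X_B onto the maximal ideal space X_A. -/
/-!
Pulling back characters along `φ` is continuous for the weak-* topologies, and injective because
characters are continuous and `φ` has dense range; a continuous bijection from a compact space to
a Hausdorff space is a homeomorphism. For surjectivity, take a character `ψ` of `A`. The closure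
of the ideal generated by `φ (ker ψ)` is the closure of `φ (ker ψ)` itself, by density of `φ`.
It is proper: otherwise, units of `B` being open, some `φ a` with `ψ a = 0` is a unit, so `a` is
a unit since `φ` is spectral, which is absurd. A character `χ` of `B` vanishing on a maximal ideal
containing it has `ker ψ ≤ ker (χ ∘ φ)`, and maximality of `ker ψ` gives `χ ∘ φ = ψ`.
-/

open WeakDual WeakDual.CharacterSpace Function

theorem Ideal.map_subset_closure_image {A B : Type*} [Semiring A] [Semiring B]
    [TopologicalSpace B] [IsTopologicalSemiring B] {f : A →+* B} (hf : DenseRange f)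
    (I : Ideal A) : (I.map f : Set B) ⊆ closure (f '' I) := by
  intro x hx
  induction hx using Submodule.span_induction with
  | mem x hx => exact subset_closure hx
  | zero => exact subset_closure ⟨0, I.zero_mem, map_zero f⟩
  | add x y _ _ hx hy =>
    refine map_mem_closure₂ continuous_add hx hy ?_
    rintro _ ⟨a, ha, rfl⟩ _ ⟨b, hb, rfl⟩
    exact ⟨a + b, I.add_mem ha hb, map_add f a b⟩
  | smul c x _ hx =>
    refine map_mem_closure₂ continuous_mul (hf c) hx ?_
    rintro _ ⟨a, rfl⟩ _ ⟨b, hb, rfl⟩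
    exact ⟨a * b, I.mul_mem_left a hb, map_mul f a b⟩

theorem Ideal.closure_map_ne_top {A B : Type*} [Ring A] [NormedRing B] [CompleteSpace B]
    {f : A →+* B} (hf : DenseRange f) (hunit : ∀ a, IsUnit (f a) → IsUnit a)
    {I : Ideal A} (hI : I ≠ ⊤) : (I.map f).closure ≠ ⊤ := by
  intro htop
  have hone : (1 : B) ∈ closure (f '' I) :=
    closure_minimal (I.map_subset_closure_image hf) isClosed_closure
      (by rw [← Ideal.coe_closure, htop]; trivial)
  obtain ⟨_, hunit_fa, a, ha, rfl⟩ := mem_closure_iff.mp hone _ Units.isOpen isUnit_one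
  exact hI (I.eq_top_of_isUnit_mem ha (hunit a hunit_fa))

namespace WeakDual.CharacterSpace

section comap

variable {𝕜 A B : Type*} [NontriviallyNormedField 𝕜] [NormedRing A] [CompleteSpace A]
  [NormedAlgebra 𝕜 A] [Semiring B] [TopologicalSpace B] [Algebra 𝕜 B]

/-- `χ ∘ φ` is continuous because characters of the Banach algebra `A` are automatically
continuous. -/
noncomputable def comap (φ : A →ₐ[𝕜] B) : C(characterSpace 𝕜 B, characterSpace 𝕜 A) where
  toFun χ := equivAlgHom.symm ((toAlgHom χ).comp φ)
  continuous_toFun :=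
    (continuous_of_continuous_eval fun a =>
      (eval_continuous (φ a)).comp continuous_subtype_val).subtype_mk _

@[simp]
theorem comap_apply (φ : A →ₐ[𝕜] B) (χ : characterSpace 𝕜 B) (a : A) :
    comap φ χ a = χ (φ a) :=
  rfl

theorem comap_injective {φ : A →ₐ[𝕜] B} (hφ : DenseRange φ) : Injective (comap φ) :=
  fun χ₁ χ₂ h => DFunLike.coe_injective <|
    hφ.equalizer (map_continuous χ₁) (map_continuous χ₂) (funext fun a => DFunLike.congr_fun h a)

end comap

theorem eq_of_ker_le {𝕜 A : Type*} [Field 𝕜] [TopologicalSpace 𝕜] [ContinuousAdd 𝕜]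
    [ContinuousConstSMul 𝕜 𝕜] [Ring A] [TopologicalSpace A] [Algebra 𝕜 A]
    {ψ χ : characterSpace 𝕜 A} (h : RingHom.ker ψ ≤ RingHom.ker χ) : ψ = χ :=
  ext_ker ((ker_isMaximal ψ).eq_of_le (RingHom.ker_ne_top χ) h)

section Complex

variable {A B : Type*} [NormedCommRing A] [NormedAlgebra ℂ A] [CompleteSpace A]
  [NormedCommRing B] [NormedAlgebra ℂ B] [CompleteSpace B]

theorem exists_forall_apply_eq_zero_of_ne_top {I : Ideal B} (hI : I ≠ ⊤) :
    ∃ χ : characterSpace ℂ B, ∀ b ∈ I, χ b = 0 := by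
  obtain ⟨M, hM, hIM⟩ := I.exists_le_maximal hI
  exact ⟨M.toCharacterSpace, fun b hb => M.toCharacterSpace_apply_eq_zero_of_mem (hIM hb)⟩

theorem comap_surjective {φ : A →ₐ[ℂ] B} (hφ : DenseRange φ)
    (hunit : ∀ a, IsUnit (φ a) → IsUnit a) : Surjective (comap φ) := by
  intro ψ
  have hproper : ((RingHom.ker ψ).map (φ : A →+* B)).closure ≠ ⊤ :=
    Ideal.closure_map_ne_top hφ hunit (RingHom.ker_ne_top ψ)
  obtain ⟨χ, hχ⟩ := exists_forall_apply_eq_zero_of_ne_top hproper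
  refine ⟨χ, (eq_of_ker_le fun a ha => ?_).symm⟩
  exact hχ (φ a) (subset_closure (Ideal.mem_map_of_mem _ ha))

end Complex

end WeakDual.CharacterSpace

theorem characterSpace_homeomorph_of_dense_spectral_general {A B : Type*}
    [NormedCommRing A] [NormedAlgebra ℂ A] [CompleteSpace A]
    [NormedCommRing B] [NormedAlgebra ℂ B] [CompleteSpace B]
    (φ : A →ₐ[ℂ] B) (hdense : DenseRange φ)
    (hspec : ∀ a : A, spectrum ℂ (φ a) = spectrum ℂ a) :
    ∃ h : WeakDual.characterSpace ℂ B ≃ₜ WeakDual.characterSpace ℂ A,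
      ∀ (χ : WeakDual.characterSpace ℂ B) (a : A), h χ a = χ (φ a) := by
  have hunit : ∀ a, IsUnit (φ a) → IsUnit a := fun a h => by
    rw [← spectrum.zero_notMem_iff ℂ, ← hspec a]
    exact spectrum.zero_notMem ℂ h
  let e := Equiv.ofBijective (comap φ) ⟨comap_injective hdense, comap_surjective hdense hunit⟩
  exact ⟨Continuous.homeoOfEquivCompactToT2 (f := e) (comap φ).continuous, comap_apply φ⟩

/-- If `φ : A → B` is a dense and spectral morphism of unital commutative complex Banach
algebras, then `χ ↦ χ ∘ φ` is a homeomorphism from the maximal ideal space `X_B` onto `X_A`. -/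
theorem characterSpace_homeomorph_of_dense_spectral {A B : Type*}
    [NormedCommRing A] [NormedAlgebra ℂ A] [CompleteSpace A]
    [NormedCommRing B] [NormedAlgebra ℂ B] [CompleteSpace B]
    (φ : A →ₐ[ℂ] B) (hcont : Continuous φ) (hdense : DenseRange φ)
    (hspec : ∀ a : A, spectrum ℂ (φ a) = spectrum ℂ a) :
    ∃ h : WeakDual.characterSpace ℂ B ≃ₜ WeakDual.characterSpace ℂ A,
      ∀ (χ : WeakDual.characterSpace ℂ B) (a : A), h χ a = χ (φ a) :=
  characterSpace_homeomorph_of_dense_spectral_general φ hdense hspec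
end

section
/- (Swan) Let φ : A → B be a dense and spectral morphism of unital complex Banach algebras. Then bsr A ≤ bsr B. -/
/-- The set of unimodular `n`-tuples: tuples `(a₁, …, aₙ)` with `A·a₁ + ⋯ + A·aₙ = A`. -/
def Lg (A : Type*) [Ring A] (n : ℕ) : Set (Fin n → A) :=
  {a | ∃ x : Fin n → A, ∑ i, x i * a i = 1}

/-- The Bass stable rank: the least `n ≥ 1` such that every unimodular `(n+1)`-tuple is
reducible to a unimodular `n`-tuple. -/
noncomputable def bsr (A : Type*) [Ring A] : ℕ∞ :=
  sInf {c : ℕ∞ | ∃ n : ℕ, c = n ∧ 1 ≤ n ∧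
    ∀ a ∈ Lg A (n + 1), ∃ x : Fin n → A,
      (fun i : Fin n => a i.castSucc + x i * a (Fin.last n)) ∈ Lg A n}

/-!
Unimodularity of a tuple is an open condition in a Banach algebra, because it asks for some
linear combination of the entries to be invertible and the units form an open set. So a
reduction `(bᵢ + yᵢ b_{n+1})ᵢ` found in `B` for the image of a unimodular tuple of `A` survives
replacing `y` by a nearby `φ ∘ x`, which exists by density. A spectral morphism reflects
invertibility, and this lets unimodularity in `B` be pulled back along the same density
argument, now applied to the coefficients of the linear combination.
-/

open Function

lemma mem_Lg_iff_exists_isUnit {A : Type*} [Ring A] {n : ℕ} {b : Fin n → A} :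
    b ∈ Lg A n ↔ ∃ z : Fin n → A, IsUnit (∑ i, z i * b i) := by
  refine ⟨fun ⟨z, hz⟩ => ⟨z, hz ▸ isUnit_one⟩, fun ⟨z, u, hu⟩ => ⟨fun i => ↑u⁻¹ * z i, ?_⟩⟩
  simp_rw [mul_assoc]
  rw [← Finset.mul_sum, ← hu, u.inv_mul]

lemma comp_mem_Lg {A B F : Type*} [Ring A] [Ring B] [FunLike F A B] [RingHomClass F A B]
    (φ : F) {n : ℕ} {a : Fin n → A} (ha : a ∈ Lg A n) : φ ∘ a ∈ Lg B n := by
  obtain ⟨x, hx⟩ := ha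
  exact ⟨φ ∘ x, by simp only [comp_apply, ← map_mul, ← map_sum, hx, map_one]⟩

lemma isOpen_Lg (B : Type*) [NormedRing B] [HasSummableGeomSeries B] (n : ℕ) :
    IsOpen (Lg B n) := by
  have : Lg B n = ⋃ z : Fin n → B, (fun b => ∑ i, z i * b i) ⁻¹' {x | IsUnit x} := by
    ext b
    simp [mem_Lg_iff_exists_isUnit]
  rw [this]
  exact isOpen_iUnion fun z => Units.isOpen.preimage (by fun_prop)

lemma isLocalHom_of_spectrum_map_eq {R A B : Type*} [CommSemiring R] [Ring A] [Ring B]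
    [Algebra R A] [Algebra R B] (φ : A →ₐ[R] B)
    (hspec : ∀ a : A, spectrum R (φ a) = spectrum R a) : IsLocalHom φ where
  map_nonunit a h := by
    rw [← spectrum.zero_notMem_iff R, ← hspec]
    exact spectrum.zero_notMem R h

lemma mem_Lg_of_comp_mem_Lg {A B F : Type*} [Ring A] [NormedRing B] [HasSummableGeomSeries B]
    [FunLike F A B] [RingHomClass F A B] (φ : F) [IsLocalHom φ] (hdense : DenseRange φ)
    {n : ℕ} {c : Fin n → A} (h : φ ∘ c ∈ Lg B n) : c ∈ Lg A n := by
  obtain ⟨z, hz⟩ := h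
  have hU : IsOpen {w : Fin n → B | IsUnit (∑ i, w i * φ (c i))} :=
    Units.isOpen.preimage (by fun_prop)
  obtain ⟨x, hx⟩ := (DenseRange.piMap fun _ => hdense).exists_mem_open hU
    ⟨z, show IsUnit (∑ i, z i * (φ ∘ c) i) from hz ▸ isUnit_one⟩
  refine mem_Lg_iff_exists_isUnit.2 ⟨x, IsUnit.of_map φ _ ?_⟩
  simpa [map_sum] using hx

theorem bsr_le_bsr_of_dense_spectral_general {A B : Type*}
    [NormedRing A] [NormedAlgebra ℂ A]
    [NormedRing B] [NormedAlgebra ℂ B] [CompleteSpace B]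
    (φ : A →ₐ[ℂ] B) (hdense : DenseRange φ)
    (hspec : ∀ a : A, spectrum ℂ (φ a) = spectrum ℂ a) :
    bsr A ≤ bsr B := by
  have := isLocalHom_of_spectrum_map_eq φ hspec
  apply sInf_le_sInf
  rintro _ ⟨n, rfl, hn, hB⟩
  refine ⟨n, rfl, hn, fun a ha => ?_⟩
  obtain ⟨y, hy⟩ := hB _ (comp_mem_Lg φ ha)
  let U := {w : Fin n → B | (fun i => φ (a i.castSucc) + w i * φ (a (Fin.last n))) ∈ Lg B n}
  have hU : IsOpen U := (isOpen_Lg B n).preimage (by fun_prop)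
  obtain ⟨x, hx⟩ := (DenseRange.piMap fun _ => hdense).exists_mem_open hU ⟨y, hy⟩
  refine ⟨x, mem_Lg_of_comp_mem_Lg φ hdense ?_⟩
  simpa [U, comp_def] using hx

/-- (Swan) If `φ : A → B` is a dense and spectral morphism of unital complex Banach algebras,
then `bsr A ≤ bsr B`. -/
theorem bsr_le_bsr_of_dense_spectral {A B : Type*}
    [NormedRing A] [NormedAlgebra ℂ A] [CompleteSpace A]
    [NormedRing B] [NormedAlgebra ℂ B] [CompleteSpace B]
    (φ : A →ₐ[ℂ] B) (hcont : Continuous φ) (hdense : DenseRange φ)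
    (hspec : ∀ a : A, spectrum ℂ (φ a) = spectrum ℂ a) :
    bsr A ≤ bsr B :=
  bsr_le_bsr_of_dense_spectral_general φ hdense hspec
end

section
/- Let φ : A → B be a morphism of unital complex Banach algebras with dense image. Then tsr B ≤ tsr A. -/
/-- The topological stable rank: the least `n ≥ 1` such that `Lg_n(A)` is dense in `Aⁿ`. -/
noncomputable def tsr (A : Type*) [Ring A] [TopologicalSpace A] : ℕ∞ :=
  sInf {c : ℕ∞ | ∃ n : ℕ, c = n ∧ 1 ≤ n ∧ Dense (Lg A n)}

/-!
A ring homomorphism maps unimodular tuples to unimodular tuples (apply it to a relation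
`∑ xᵢ aᵢ = 1`), and if it is continuous with dense range, so is its coordinatewise action on
`n`-tuples; a continuous map with dense range sends dense sets to dense sets. Hence density of
`Lg_n(A)` forces density of `Lg_n(B)`, and the set over which `tsr A` is an infimum is contained
in the one for `tsr B`.
-/

theorem mapsTo_Lg {A B F : Type*} [Ring A] [Ring B] [FunLike F A B] [RingHomClass F A B]
    (f : F) (n : ℕ) : Set.MapsTo (Pi.map fun _ => f) (Lg A n) (Lg B n) := by
  rintro a ⟨x, hx⟩
  refine ⟨fun i => f (x i), ?_⟩
  simpa only [Pi.map_apply, map_sum, map_mul, map_one] using congrArg f hx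

theorem Dense.Lg_of_denseRange {A B F : Type*} [Ring A] [TopologicalSpace A]
    [Ring B] [TopologicalSpace B] [FunLike F A B] [RingHomClass F A B]
    {f : F} (hcont : Continuous f) (hdense : DenseRange f) {n : ℕ} (hA : Dense (Lg A n)) :
    Dense (Lg B n) :=
  ((DenseRange.piMap fun _ => hdense).dense_image (Continuous.piMap fun _ => hcont) hA).mono
    (mapsTo_Lg f n).image_subset

theorem tsr_le_tsr_of_denseRange_general {A B : Type*}
    [NormedRing A] [NormedAlgebra ℂ A]
    [NormedRing B] [NormedAlgebra ℂ B]
    (φ : A →ₐ[ℂ] B) (hcont : Continuous φ) (hdense : DenseRange φ) :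
    tsr B ≤ tsr A := by
  apply sInf_le_sInf
  rintro _ ⟨n, rfl, hn, hA⟩
  exact ⟨n, rfl, hn, hA.Lg_of_denseRange hcont hdense⟩

/-- If `φ : A → B` is a morphism of unital complex Banach algebras with dense image,
then `tsr B ≤ tsr A`. -/
theorem tsr_le_tsr_of_denseRange {A B : Type*}
    [NormedRing A] [NormedAlgebra ℂ A] [CompleteSpace A]
    [NormedRing B] [NormedAlgebra ℂ B] [CompleteSpace B]
    (φ : A →ₐ[ℂ] B) (hcont : Continuous φ) (hdense : DenseRange φ) :
    tsr B ≤ tsr A :=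
  tsr_le_tsr_of_denseRange_general φ hcont hdense
end

section
/- (Homotopy invariance of the homotopical stable ranks) Let A and B be unital complex Banach algebras that are homotopy equivalent, i.e. there exist continuous unital algebra morphisms φ : A → B and ψ : B → A such that ψ∘φ is connected to id_A and φ∘ψ is connected to id_B by paths of continuous unital algebra morphisms (continuous in the point-norm sense, jointly continuous in the time and algebra variables). Then csr A = csr B and gsr A = gsr B. -/
/-- The connected stable rank: the least `n ≥ 1` such that `Lg_m(A)` is connected
for all `m ≥ n`. -/
noncomputable def csr (A : Type*) [Ring A] [TopologicalSpace A] : ℕ∞ :=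
  sInf {c : ℕ∞ | ∃ n : ℕ, c = n ∧ 1 ≤ n ∧ ∀ m : ℕ, n ≤ m → IsConnected (Lg A m)}

/-- The general stable rank: the least `n ≥ 1` such that `GL_m(A)` acts transitively on
`Lg_m(A)` for all `m ≥ n` (an invertible matrix acting on a column vector by
left multiplication). -/
noncomputable def gsr (A : Type*) [Ring A] : ℕ∞ :=
  sInf {c : ℕ∞ | ∃ n : ℕ, c = n ∧ 1 ≤ n ∧ ∀ m : ℕ, n ≤ m →
    ∀ a ∈ Lg A m, ∀ b ∈ Lg A m,
      ∃ g : Matrix (Fin m) (Fin m) A, IsUnit g ∧ g.mulVec a = b}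

/-!
A homotopy `F` from `ψ ∘ φ` to the identity moves a unimodular tuple `a` along the path
`t ↦ F t ∘ a` inside `Lg A m`, so `a` and `ψ ∘ φ ∘ a` lie in one connected component of `Lg A m`.
Connectedness of `Lg B m` therefore passes to `Lg A m` through the connected set `ψ ∘ Lg B m`.

For transitivity, connected components of `Lg A m` lie in `GL_m(A)`-orbits: if `x ⬝ a = 1` and
`b` is close to `a`, then `1 + x ⬝ (b - a)` is a unit, hence so is the rank-one perturbation
`1 + (b - a) xᵀ` (Sherman–Morrison), and it carries `a` to `b`. So orbits are open, and an open
equivalence relation is trivial on a connected set. Then `a ~ ψ ∘ φ ∘ a ~ ψ ∘ φ ∘ b ~ b`, the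
middle step being the image under `ψ` of a matrix carrying `φ ∘ a` to `φ ∘ b`.
-/

open Matrix Topology

section Algebra

variable {A B : Type*} [Ring A] [Ring B] {m : ℕ}

theorem Lg.comp_mem (f : A →+* B) {a : Fin m → A} (ha : a ∈ Lg A m) : ⇑f ∘ a ∈ Lg B m := by
  obtain ⟨x, hx⟩ := ha
  refine ⟨⇑f ∘ x, ?_⟩
  simpa only [map_sum, map_mul, map_one, Function.comp_apply] using congrArg f hx

def GLOrbitRel (a b : Fin m → A) : Prop :=
  ∃ g : Matrix (Fin m) (Fin m) A, IsUnit g ∧ g *ᵥ a = b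

namespace GLOrbitRel

theorem symm {a b : Fin m → A} : GLOrbitRel a b → GLOrbitRel b a := by
  rintro ⟨_, ⟨g, rfl⟩, rfl⟩
  exact ⟨↑g⁻¹, g⁻¹.isUnit, by rw [mulVec_mulVec, Units.inv_mul, one_mulVec]⟩

theorem trans {a b c : Fin m → A} : GLOrbitRel a b → GLOrbitRel b c → GLOrbitRel a c := by
  rintro ⟨g, hg, rfl⟩ ⟨h, hh, rfl⟩
  exact ⟨h * g, hh.mul hg, (mulVec_mulVec _ _ _).symm⟩

theorem map (f : A →+* B) {a b : Fin m → A} :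
    GLOrbitRel a b → GLOrbitRel (⇑f ∘ a) (⇑f ∘ b) := by
  rintro ⟨g, hg, rfl⟩
  exact ⟨g.map f, hg.map f.mapMatrix, funext fun i => (RingHom.map_mulVec f g a i).symm⟩

end GLOrbitRel

theorem Matrix.one_add_vecMulVec_smul_mul {n : Type*} [Fintype n] [DecidableEq n]
    (v x : n → A) (r s : A) :
    (1 + vecMulVec v (r • x)) * (1 + vecMulVec v (s • x)) =
      1 + vecMulVec v ((r + s + r * (x ⬝ᵥ v) * s) • x) := by
  rw [add_mul, mul_add, mul_add, one_mul, mul_one, one_mul, vecMulVec_mul_vecMulVec,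
    smul_dotProduct, smul_smul, add_smul, add_smul, vecMulVec_add, vecMulVec_add, smul_eq_mul]
  abel

theorem Matrix.isUnit_one_add_vecMulVec {n : Type*} [Fintype n] [DecidableEq n]
    {v x : n → A} (h : IsUnit (1 + x ⬝ᵥ v)) : IsUnit (1 + vecMulVec v x) := by
  obtain ⟨u, hu⟩ := h
  have key (r s : A) (hrs : r + s + r * (x ⬝ᵥ v) * s = 0) :
      (1 + vecMulVec v (r • x)) * (1 + vecMulVec v (s • x)) = 1 := by
    rw [one_add_vecMulVec_smul_mul, hrs, zero_smul, vecMulVec_zero, add_zero]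
  refine ⟨⟨1 + vecMulVec v x, 1 + vecMulVec v ((-↑u⁻¹ : A) • x), ?_, ?_⟩, rfl⟩
  · simpa only [one_smul] using key 1 (-↑u⁻¹) <| calc
      1 + -↑u⁻¹ + 1 * (x ⬝ᵥ v) * -↑u⁻¹ = 1 - (1 + x ⬝ᵥ v) * ↑u⁻¹ := by noncomm_ring
      _ = 0 := by rw [← hu, Units.mul_inv, sub_self]
  · simpa only [one_smul] using key (-↑u⁻¹) 1 <| calc
      -↑u⁻¹ + 1 + -↑u⁻¹ * (x ⬝ᵥ v) * 1 = 1 - ↑u⁻¹ * (1 + x ⬝ᵥ v) := by noncomm_ring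
      _ = 0 := by rw [← hu, Units.inv_mul, sub_self]

theorem GLOrbitRel.of_isUnit {a b x : Fin m → A} (hx : x ⬝ᵥ a = 1)
    (h : IsUnit (1 + x ⬝ᵥ (b - a))) : GLOrbitRel a b := by
  refine ⟨_, isUnit_one_add_vecMulVec h, ?_⟩
  rw [add_mulVec, one_mulVec, vecMulVec_mulVec, hx, MulOpposite.op_one, one_smul,
    add_sub_cancel]

end Algebra

section Banach

variable {A : Type*} [NormedRing A] [HasSummableGeomSeries A] {m : ℕ}

theorem eventually_glOrbitRel_of_mem_Lg {a : Fin m → A} (ha : a ∈ Lg A m) :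
    ∀ᶠ b in 𝓝 a, GLOrbitRel a b := by
  obtain ⟨x, hx⟩ := ha
  have hcont : Continuous fun b : Fin m → A => 1 + x ⬝ᵥ (b - a) := by fun_prop
  have hunit : ∀ᶠ b in 𝓝 a, IsUnit (1 + x ⬝ᵥ (b - a)) :=
    hcont.continuousAt.eventually_mem (Units.isOpen.mem_nhds (by simp))
  exact hunit.mono fun b hb => GLOrbitRel.of_isUnit hx hb

theorem GLOrbitRel.of_mem_connectedComponentIn {a b : Fin m → A}
    (h : b ∈ connectedComponentIn (Lg A m) a) : GLOrbitRel a b := by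
  have ha : a ∈ Lg A m := connectedComponentIn_nonempty_iff.mp ⟨b, h⟩
  refine isPreconnected_connectedComponentIn.induction₂ GLOrbitRel (fun c hc => ?_)
    (fun _ _ _ _ _ _ => GLOrbitRel.trans) (fun _ _ _ _ => GLOrbitRel.symm)
    (mem_connectedComponentIn ha) h
  exact eventually_nhdsWithin_of_eventually_nhds
    (eventually_glOrbitRel_of_mem_Lg (connectedComponentIn_subset _ _ hc))

end Banach

def RingHom.IsHomotopicToId {A : Type*} [Ring A] [TopologicalSpace A] (f : A →+* A) : Prop :=
  ∃ F : unitInterval → A →+* A, Continuous (fun p : unitInterval × A => F p.1 p.2) ∧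
    F 0 = f ∧ F 1 = RingHom.id A

section Homotopy

variable {A B : Type*} [Ring A] [TopologicalSpace A] [Ring B] [TopologicalSpace B] {m : ℕ}

theorem RingHom.IsHomotopicToId.comp_mem_connectedComponentIn_Lg {f : A →+* A}
    (hf : f.IsHomotopicToId) {a : Fin m → A} (ha : a ∈ Lg A m) :
    ⇑f ∘ a ∈ connectedComponentIn (Lg A m) a := by
  obtain ⟨F, hF, rfl, hF₁⟩ := hf
  have hpath : Continuous fun t => ⇑(F t) ∘ a :=
    continuous_pi fun i => hF.comp (continuous_id.prodMk continuous_const)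
  refine (isPreconnected_range hpath).subset_connectedComponentIn ⟨1, ?_⟩ ?_ ⟨0, rfl⟩
  · simp only [hF₁, RingHom.coe_id, Function.id_comp]
  · rintro _ ⟨t, rfl⟩
    exact Lg.comp_mem (F t) ha

theorem isConnected_Lg_of_isHomotopicToId (φ : A →+* B) (ψ : B →+* A) (hψ : Continuous ψ)
    (hψφ : (ψ.comp φ).IsHomotopicToId) (hB : IsConnected (Lg B m)) :
    IsConnected (Lg A m) := by
  have himage : IsConnected ((⇑ψ ∘ ·) '' Lg B m) :=
    hB.image _ (continuous_pi fun i => hψ.comp (continuous_apply i)).continuousOn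
  have himage_sub : (⇑ψ ∘ ·) '' Lg B m ⊆ Lg A m := by
    rintro _ ⟨b, hb, rfl⟩
    exact Lg.comp_mem ψ hb
  obtain ⟨z, hz⟩ := himage.nonempty
  refine ⟨⟨z, himage_sub hz⟩, isPreconnected_of_forall z fun a ha => ?_⟩
  have hψφa := hψφ.comp_mem_connectedComponentIn_Lg ha
  refine ⟨connectedComponentIn (Lg A m) a, connectedComponentIn_subset _ _, ?_,
    mem_connectedComponentIn ha, isPreconnected_connectedComponentIn⟩
  rw [connectedComponentIn_eq hψφa]
  exact himage.isPreconnected.subset_connectedComponentIn ⟨φ ∘ a, Lg.comp_mem φ ha, rfl⟩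
    himage_sub hz

end Homotopy

theorem forall_glOrbitRel_Lg_of_isHomotopicToId {A B : Type*} [NormedRing A]
    [HasSummableGeomSeries A] [Ring B] {m : ℕ} (φ : A →+* B) (ψ : B →+* A)
    (hψφ : (ψ.comp φ).IsHomotopicToId)
    (hB : ∀ a ∈ Lg B m, ∀ b ∈ Lg B m, GLOrbitRel a b) :
    ∀ a ∈ Lg A m, ∀ b ∈ Lg A m, GLOrbitRel a b := by
  intro a ha b hb
  have hφ : GLOrbitRel (⇑φ ∘ a) (⇑φ ∘ b) := hB _ (Lg.comp_mem φ ha) _ (Lg.comp_mem φ hb)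
  exact ((GLOrbitRel.of_mem_connectedComponentIn
    (hψφ.comp_mem_connectedComponentIn_Lg ha)).trans (hφ.map ψ)).trans
    (GLOrbitRel.of_mem_connectedComponentIn (hψφ.comp_mem_connectedComponentIn_Lg hb)).symm

theorem csr_eq_of_forall_isConnected_Lg_iff {A B : Type*} [Ring A] [TopologicalSpace A]
    [Ring B] [TopologicalSpace B] (h : ∀ m, IsConnected (Lg A m) ↔ IsConnected (Lg B m)) :
    csr A = csr B := by
  simp only [csr, h]

theorem gsr_eq_of_forall_glOrbitRel_Lg_iff {A B : Type*} [Ring A] [Ring B]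
    (h : ∀ m, (∀ a ∈ Lg A m, ∀ b ∈ Lg A m, GLOrbitRel a b) ↔
      ∀ a ∈ Lg B m, ∀ b ∈ Lg B m, GLOrbitRel a b) :
    gsr A = gsr B := by
  simp only [GLOrbitRel] at h
  simp only [gsr, h]

/-- (Homotopy invariance of the homotopical stable ranks) If `A` and `B` are homotopy
equivalent unital complex Banach algebras — via morphisms `φ : A → B` and `ψ : B → A` such that
`ψ ∘ φ` and `φ ∘ ψ` are connected to the respective identities by jointly continuous paths of
continuous unital algebra morphisms — then `csr A = csr B` and `gsr A = gsr B`. -/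
theorem csr_gsr_eq_of_homotopy_equivalent {A B : Type*}
    [NormedRing A] [NormedAlgebra ℂ A] [CompleteSpace A]
    [NormedRing B] [NormedAlgebra ℂ B] [CompleteSpace B]
    (φ : A →ₐ[ℂ] B) (ψ : B →ₐ[ℂ] A) (hφ : Continuous φ) (hψ : Continuous ψ)
    (F : unitInterval → (A →ₐ[ℂ] A))
    (hF : Continuous fun p : unitInterval × A => F p.1 p.2)
    (hF₀ : F 0 = ψ.comp φ) (hF₁ : F 1 = AlgHom.id ℂ A)
    (G : unitInterval → (B →ₐ[ℂ] B))
    (hG : Continuous fun p : unitInterval × B => G p.1 p.2)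
    (hG₀ : G 0 = φ.comp ψ) (hG₁ : G 1 = AlgHom.id ℂ B) :
    csr A = csr B ∧ gsr A = gsr B := by
  have hψφ : ((ψ : B →+* A).comp φ).IsHomotopicToId :=
    ⟨fun t => F t, hF, congrArg AlgHom.toRingHom hF₀, congrArg AlgHom.toRingHom hF₁⟩
  have hφψ : ((φ : A →+* B).comp ψ).IsHomotopicToId :=
    ⟨fun t => G t, hG, congrArg AlgHom.toRingHom hG₀, congrArg AlgHom.toRingHom hG₁⟩
  refine ⟨csr_eq_of_forall_isConnected_Lg_iff fun m => ⟨?_, ?_⟩,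
    gsr_eq_of_forall_glOrbitRel_Lg_iff fun m => ⟨?_, ?_⟩⟩
  · exact isConnected_Lg_of_isHomotopicToId (ψ : B →+* A) φ hφ hφψ
  · exact isConnected_Lg_of_isHomotopicToId (φ : A →+* B) ψ hψ hψφ
  · exact forall_glOrbitRel_Lg_of_isHomotopicToId (ψ : B →+* A) φ hφψ
  · exact forall_glOrbitRel_Lg_of_isHomotopicToId (φ : A →+* B) ψ hψφ
end
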